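/- Proposition: The no proxies control is fragile. Specifically, there exist a game (X, λ_w, p, G, v_q, v_u, ω) and δ̄ > 0 such that for every ε > 0 there exists a no-proxies-controlled ε-equilibrium (c̄, d) whose ℓ²-distance from every no-proxies-controlled equilibrium of the game is at least δ̄; hence the no proxies control does not satisfy the definition of being not fragile. -/

import Mathlib

/-!
Formalization of the Coate–Loury statistical discrimination model with
machine-learning (contractible) beliefs, following Zhu,
"The Impact of Equal Opportunity on Statistical Discrimination".
-/

open scoped BigOperators
open MeasureTheory

noncomputable section

attribute [local instance] Classical.propDecidable

/-- Group identities `I = {w, b}`. -/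
inductive GrpI
  | w
  | b
deriving DecidableEq

instance : Fintype GrpI where
  elems := {GrpI.w, GrpI.b}
  complete := by intro x; cases x <;> simp

/-- Classes `Y = {q, u}` (qualified / unqualified). -/
inductive Cls
  | q
  | u
deriving DecidableEq

instance : Fintype Cls where
  elems := {Cls.q, Cls.u}
  complete := by intro x; cases x <;> simp

/-- A game `(X, λ_w, p, G, v_q, v_u, ω)` of the Coate–Loury model.  The set of
other features is the finite product `X = X_1 × ⋯ × X_N`, encoded as the pi type
`(j : Fin N) → Xs j`.  The statistical model (Assumption 1) is encoded through a
nonempty subset `Ysub ⊆ {1, …, N}` together with the factorization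
`p(x | i, y) = pY(x_𝒴 | y) · pC(x_{-𝒴} | i, x_𝒴)`.  The cost distribution is
given by an everywhere positive density `g` with `∫ g = 1` and `∫ |c| g(c) dc < ∞`. -/
structure Game (N : ℕ) (Xs : Fin N → Type) [∀ j, Fintype (Xs j)]
    [∀ j, Nonempty (Xs j)] where
  lamw : ℝ
  lamw_pos : 0 < lamw
  lamw_lt_one : lamw < 1
  Ysub : Finset (Fin N)
  Ysub_nonempty : Ysub.Nonempty
  pY : ((j : Ysub) → Xs j.1) → Cls → ℝ
  pC : GrpI → ((j : Fin N) → Xs j) → ℝ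
  pY_pos : ∀ xY y, 0 < pY xY y
  pC_pos : ∀ i x, 0 < pC i x
  pY_sum : ∀ y, ∑ xY, pY xY y = 1
  pC_sum : ∀ (i : GrpI) (xY : (j : Ysub) → Xs j.1),
    ∑ x ∈ Finset.univ.filter
        (fun x : (j : Fin N) → Xs j => (fun j : Ysub => x j.1) = xY),
      pC i x = 1
  g : ℝ → ℝ
  g_pos : ∀ c, 0 < g c
  g_int : Integrable g
  g_norm : (∫ c, g c) = 1
  g_abs_int : Integrable fun c => |c| * g c
  vq : ℝ
  vu : ℝ
  om : ℝ
  vq_pos : 0 < vq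
  vu_pos : 0 < vu
  om_pos : 0 < om

section Policies

variable {N : ℕ} {Xs : Fin N → Type}

/-- A decision policy `d : I × X → [0,1]`. -/
def IsPolicy (d : GrpI → ((j : Fin N) → Xs j) → ℝ) : Prop :=
  ∀ i x, d i x ∈ Set.Icc (0 : ℝ) 1

/-- A decision policy when data is color-blind, `d_cb : X → [0,1]`. -/
def IsCbPolicy (dcb : ((j : Fin N) → Xs j) → ℝ) : Prop :=
  ∀ x, dcb x ∈ Set.Icc (0 : ℝ) 1

/-- `S ⊆ {1, …, N}` has the dependence property for the belief `f`:
`f` depends on `(i, x)` only up to `(i, x_S)`. -/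
def DepProp {I : Type} (f : I → ((j : Fin N) → Xs j) → ℝ)
    (S : Finset (Fin N)) : Prop :=
  ∀ (i : I) (x x' : (j : Fin N) → Xs j), (∀ j ∈ S, x j = x' j) → f i x = f i x'

/-- The minimal subset `Ŷ(f)` with the dependence property. -/
def minDep {I : Type} (f : I → ((j : Fin N) → Xs j) → ℝ) : Finset (Fin N) :=
  Finset.univ.filter fun j => ∀ S : Finset (Fin N), DepProp f S → j ∈ S

variable [∀ j, Fintype (Xs j)]

/-- Full-support probability distributions on `I × X` (the set `Δ°(I × X)`). -/
def FullSupp (μ : GrpI → ((j : Fin N) → Xs j) → ℝ) : Prop :=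
  (∀ i x, 0 < μ i x) ∧ ∑ i, ∑ x, μ i x = 1

/-- Beliefs valued in `(0, 1)`. -/
def OpenBelief (f : GrpI → ((j : Fin N) → Xs j) → ℝ) : Prop :=
  ∀ i x, f i x ∈ Set.Ioo (0 : ℝ) 1

/-- Acceptance rate of group `i`. -/
def AR (i : GrpI) (d μ : GrpI → ((j : Fin N) → Xs j) → ℝ) : ℝ :=
  (∑ x, d i x * μ i x) / ∑ x, μ i x

/-- True positive rate of group `i`. -/
def TP (i : GrpI) (d μ f : GrpI → ((j : Fin N) → Xs j) → ℝ) : ℝ :=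
  (∑ x, d i x * μ i x * f i x) / ∑ x, μ i x * f i x

/-- The equal opportunity control `k(X, μ, f)`. -/
def EOset (μ f : GrpI → ((j : Fin N) → Xs j) → ℝ) :
    Set (GrpI → ((j : Fin N) → Xs j) → ℝ) :=
  {d | IsPolicy d ∧ TP GrpI.w d μ f = TP GrpI.b d μ f}

/-- The color-blind control: all color-blind decision policies. -/
def CBset : Set (GrpI → ((j : Fin N) → Xs j) → ℝ) :=
  {d | IsPolicy d ∧ ∀ x, d GrpI.w x = d GrpI.b x}

/-- The no proxies control: policies depending on `(i,x)` only through `x_{Ŷ(f)}`. -/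
def NoProxies (_μ f : GrpI → ((j : Fin N) → Xs j) → ℝ) :
    Set (GrpI → ((j : Fin N) → Xs j) → ℝ) :=
  {d | IsPolicy d ∧
    ∀ i i' x x', (∀ j ∈ minDep f, x j = x' j) → d i x = d i' x'}

/-- `ℓ²` distance between decision policies. -/
def polDist (d d' : GrpI → ((j : Fin N) → Xs j) → ℝ) : ℝ :=
  Real.sqrt (∑ i, ∑ x, (d i x - d' i x) ^ 2)

/-- `ℓ²` distance between pairs `(μ, f)`. -/
def pairDist (μ f μ' f' : GrpI → ((j : Fin N) → Xs j) → ℝ) : ℝ :=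
  Real.sqrt ((∑ i, ∑ x, (μ i x - μ' i x) ^ 2) + ∑ i, ∑ x, (f i x - f' i x) ^ 2)

/-- `ℓ²` distance between strategy profiles `(c̄, d)`. -/
def profDist (c : GrpI → ℝ) (d : GrpI → ((j : Fin N) → Xs j) → ℝ)
    (c' : GrpI → ℝ) (d' : GrpI → ((j : Fin N) → Xs j) → ℝ) : ℝ :=
  Real.sqrt ((∑ i, (c i - c' i) ^ 2) + ∑ i, ∑ x, (d i x - d' i x) ^ 2)

end Policies

/-- Upper hemicontinuity of a correspondence on a set. -/
def UpperHemicontinuousOnCorr {α β : Type*} [TopologicalSpace α] [TopologicalSpace β]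
    (F : α → Set β) (S : Set α) : Prop :=
  ∀ a ∈ S, ∀ V : Set β, IsOpen V → F a ⊆ V → ∀ᶠ a' in nhdsWithin a S, F a' ⊆ V

/-- Lower hemicontinuity of a correspondence on a set. -/
def LowerHemicontinuousOnCorr {α β : Type*} [TopologicalSpace α] [TopologicalSpace β]
    (F : α → Set β) (S : Set α) : Prop :=
  ∀ a ∈ S, ∀ V : Set β, IsOpen V → (F a ∩ V).Nonempty →
    ∀ᶠ a' in nhdsWithin a S, (F a' ∩ V).Nonempty

namespace Game

variable {N : ℕ} {Xs : Fin N → Type} [∀ j, Fintype (Xs j)] [∀ j, Nonempty (Xs j)]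
variable (Γ : Game N Xs)

/-- Projection `x ↦ x_𝒴`. -/
def proj (x : (j : Fin N) → Xs j) : (j : Γ.Ysub) → Xs j.1 := fun j => x j.1

/-- `p(x | i, y) = p(x_𝒴 | y) · p(x_{-𝒴} | i, x_𝒴)`. -/
def p (i : GrpI) (x : (j : Fin N) → Xs j) (y : Cls) : ℝ :=
  Γ.pY (Γ.proj x) y * Γ.pC i x

/-- Group probabilities `λ_w`, `λ_b = 1 - λ_w`. -/
def lam : GrpI → ℝ := fun i =>
  match i with
  | GrpI.w => Γ.lamw
  | GrpI.b => 1 - Γ.lamw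

/-- The CDF `G` of the cost distribution. -/
def G (c : ℝ) : ℝ := ∫ t in Set.Iic c, Γ.g t

/-- The likelihood function `l(x) = p(x_𝒴 | q) / p(x_𝒴 | u)`. -/
def lhd (x : (j : Fin N) → Xs j) : ℝ :=
  Γ.pY (Γ.proj x) Cls.q / Γ.pY (Γ.proj x) Cls.u

/-- The likelihood function on `X_𝒴`. -/
def lhdY (xY : (j : Γ.Ysub) → Xs j.1) : ℝ := Γ.pY xY Cls.q / Γ.pY xY Cls.u

/-- The set of likelihood values `{l_1 < … < l_n}`. -/
def LVset : Set ℝ := Set.range Γ.lhd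

/-- The assumption that `1` is not a likelihood value
(equivalently, `WW` is single-peaked). -/
def OneNotLV : Prop := (1 : ℝ) ∉ Γ.LVset

/-- The largest likelihood value `l_n`. -/
def lmax : ℝ := sSup Γ.LVset

/-- `⌈ℓ⌉`: the smallest likelihood value `≥ ℓ`. -/
def lceil (ℓ : ℝ) : ℝ := sInf {v | v ∈ Γ.LVset ∧ ℓ ≤ v}

/-- `⌈ℓ⌉⁻`: the next smallest likelihood value below `⌈ℓ⌉` (or `l_0 = 0`). -/
def lceilm (ℓ : ℝ) : ℝ := sSup (insert 0 {v | v ∈ Γ.LVset ∧ v < Γ.lceil ℓ})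

/-- The smallest likelihood value `> ℓ`. -/
def lnext (ℓ : ℝ) : ℝ := sInf {v | v ∈ Γ.LVset ∧ ℓ < v}

/-- The true distribution of features `μ_RE` given cost thresholds `c̄`. -/
def muRE (c : GrpI → ℝ) (i : GrpI) (x : (j : Fin N) → Xs j) : ℝ :=
  Γ.lam i * (Γ.G (c i) * Γ.p i x Cls.q + (1 - Γ.G (c i)) * Γ.p i x Cls.u)

/-- The true conditional probability (calibrated belief) `f_RE` given `c̄`. -/
def fRE (c : GrpI → ℝ) (i : GrpI) (x : (j : Fin N) → Xs j) : ℝ :=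
  Γ.G (c i) * Γ.p i x Cls.q /
    (Γ.G (c i) * Γ.p i x Cls.q + (1 - Γ.G (c i)) * Γ.p i x Cls.u)

/-- Utility `U_i(c̄(i), d(i))` of the representative `i`-applicant. -/
def Uapp (i : GrpI) (ci : ℝ) (di : ((j : Fin N) → Xs j) → ℝ) : ℝ :=
  Γ.om * ∑ x, (Γ.G ci * Γ.p i x Cls.q + (1 - Γ.G ci) * Γ.p i x Cls.u) * di x -
    ∫ t in Set.Iic ci, t * Γ.g t

/-- Firm utility `U_F(d, μ, f)`. -/
def UF (d μ f : GrpI → ((j : Fin N) → Xs j) → ℝ) : ℝ :=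
  ∑ i, ∑ x, d i x * μ i x * (f i x * Γ.vq - (1 - f i x) * Γ.vu)

/-- The color-blind true distribution of features `μ_cb,RE`. -/
def mucbRE (c : GrpI → ℝ) (x : (j : Fin N) → Xs j) : ℝ :=
  Γ.muRE c GrpI.w x + Γ.muRE c GrpI.b x

/-- The color-blind true conditional probability `f_cb,RE`. -/
def fcbRE (c : GrpI → ℝ) (x : (j : Fin N) → Xs j) : ℝ :=
  (Γ.muRE c GrpI.w x * Γ.fRE c GrpI.w x + Γ.muRE c GrpI.b x * Γ.fRE c GrpI.b x) /
    Γ.mucbRE c x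

/-- Firm utility when data is color-blind. -/
def UFcb (dcb μcb fcb : ((j : Fin N) → Xs j) → ℝ) : ℝ :=
  ∑ x, dcb x * μcb x * (fcb x * Γ.vq - (1 - fcb x) * Γ.vu)

/-- `d(i | l_m)`: conditional acceptance probability at likelihood value `lv`. -/
def dcond (i : GrpI) (di : ((j : Fin N) → Xs j) → ℝ) (lv : ℝ) : ℝ :=
  (∑ x ∈ Finset.univ.filter (fun x => Γ.lhd x = lv), Γ.p i x Cls.q * di x) /
    ∑ x ∈ Finset.univ.filter (fun x => Γ.lhd x = lv), Γ.p i x Cls.q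

/-- The within-group policy `d(i)` is associated with the likelihood mixture `ℓ`. -/
def AssociatedWith (i : GrpI) (di : ((j : Fin N) → Xs j) → ℝ) (ℓ : ℝ) : Prop :=
  0 ≤ ℓ ∧ ℓ ≤ Γ.lmax ∧
    ∀ lv ∈ Γ.LVset,
      (Γ.lceil ℓ < lv → Γ.dcond i di lv = 1) ∧
      (lv = Γ.lceil ℓ →
        Γ.dcond i di lv = (Γ.lceil ℓ - ℓ) / (Γ.lceil ℓ - Γ.lceilm ℓ)) ∧
      (lv < Γ.lceil ℓ → Γ.dcond i di lv = 0)

/-- A decision policy is fair if both within-group policies are associated with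
the same likelihood mixture. -/
def Fair (d : GrpI → ((j : Fin N) → Xs j) → ℝ) : Prop :=
  ∃ ℓ, Γ.AssociatedWith GrpI.w (d GrpI.w) ℓ ∧ Γ.AssociatedWith GrpI.b (d GrpI.b) ℓ

/-- `WW(l_m) = ω ∑_{x_𝒴 : l(x_𝒴) > l_m} (p(x_𝒴|q) - p(x_𝒴|u))`. -/
def WWval (t : ℝ) : ℝ :=
  Γ.om * ∑ xY ∈ Finset.univ.filter (fun xY => t < Γ.lhdY xY),
    (Γ.pY xY Cls.q - Γ.pY xY Cls.u)

/-- The piecewise-linear function `WW` interpolating the points `(l_m, WW(l_m))`. -/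
def WW (ℓ : ℝ) : ℝ :=
  if Γ.lceil ℓ = Γ.lceilm ℓ then Γ.WWval (Γ.lceil ℓ)
  else
    (Γ.WWval (Γ.lceilm ℓ) * (Γ.lceil ℓ - ℓ) +
        Γ.WWval (Γ.lceil ℓ) * (ℓ - Γ.lceilm ℓ)) /
      (Γ.lceil ℓ - Γ.lceilm ℓ)

/-- `EĒ(l_m)`: the unique cost with `G(EĒ(l_m)) = 1 / ((v_q/v_u) l_m + 1)`. -/
def EEbar (lv : ℝ) : ℝ := sInf {cc | 1 / (Γ.vq / Γ.vu * lv + 1) ≤ Γ.G cc}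

/-- The correspondence `EE : [0, l_n] ⇒ ℝ`. -/
def EE (ℓ : ℝ) : Set ℝ :=
  if ℓ = 0 then Set.Ici (Γ.EEbar (Γ.lceil 0))
  else if ℓ = Γ.lmax then Set.Iic (Γ.EEbar Γ.lmax)
  else if ℓ ∈ Γ.LVset then Set.Icc (Γ.EEbar (Γ.lnext ℓ)) (Γ.EEbar ℓ)
  else {Γ.EEbar (Γ.lceil ℓ)}

/-- Each representative applicant's cost threshold is a best response to `d`. -/
def BestResponds (c : GrpI → ℝ) (d : GrpI → ((j : Fin N) → Xs j) → ℝ) : Prop :=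
  ∀ (i : GrpI) (c' : ℝ), Γ.Uapp i c' (d i) ≤ Γ.Uapp i (c i) (d i)

/-- An (un-controlled) equilibrium. -/
def IsEquilibrium (c : GrpI → ℝ) (d : GrpI → ((j : Fin N) → Xs j) → ℝ) : Prop :=
  IsPolicy d ∧ Γ.BestResponds c d ∧
    ∀ d', IsPolicy d' →
      Γ.UF d' (Γ.muRE c) (Γ.fRE c) ≤ Γ.UF d (Γ.muRE c) (Γ.fRE c)

/-- A `k`-controlled equilibrium, for the control `(μ, f) ↦ K μ f`. -/
def IsControlledEq
    (K : (GrpI → ((j : Fin N) → Xs j) → ℝ) → (GrpI → ((j : Fin N) → Xs j) → ℝ) →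
      Set (GrpI → ((j : Fin N) → Xs j) → ℝ))
    (c : GrpI → ℝ) (d : GrpI → ((j : Fin N) → Xs j) → ℝ) : Prop :=
  d ∈ K (Γ.muRE c) (Γ.fRE c) ∧ Γ.BestResponds c d ∧
    ∀ d' ∈ K (Γ.muRE c) (Γ.fRE c),
      Γ.UF d' (Γ.muRE c) (Γ.fRE c) ≤ Γ.UF d (Γ.muRE c) (Γ.fRE c)

/-- `𝒮_k(μ, f)`: firm-optimal policies under the control `K` at `(μ, f)`. -/
def Smax
    (K : (GrpI → ((j : Fin N) → Xs j) → ℝ) → (GrpI → ((j : Fin N) → Xs j) → ℝ) →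
      Set (GrpI → ((j : Fin N) → Xs j) → ℝ))
    (μ f : GrpI → ((j : Fin N) → Xs j) → ℝ) :
    Set (GrpI → ((j : Fin N) → Xs j) → ℝ) :=
  {d | d ∈ K μ f ∧ ∀ d' ∈ K μ f, Γ.UF d' μ f ≤ Γ.UF d μ f}

/-- A `k`-controlled `ε`-equilibrium. -/
def IsCtrlEpsEq
    (K : (GrpI → ((j : Fin N) → Xs j) → ℝ) → (GrpI → ((j : Fin N) → Xs j) → ℝ) →
      Set (GrpI → ((j : Fin N) → Xs j) → ℝ))
    (ε : ℝ) (c : GrpI → ℝ) (d : GrpI → ((j : Fin N) → Xs j) → ℝ) : Prop :=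
  ∃ μ f, FullSupp μ ∧ OpenBelief f ∧
    pairDist μ f (Γ.muRE c) (Γ.fRE c) ≤ ε ∧
    Γ.BestResponds c d ∧ d ∈ K μ f ∧ ∀ d' ∈ K μ f, Γ.UF d' μ f ≤ Γ.UF d μ f

/-- Best responses of applicants to a color-blind policy. -/
def BestRespondsCb (c : GrpI → ℝ) (dcb : ((j : Fin N) → Xs j) → ℝ) : Prop :=
  ∀ (i : GrpI) (c' : ℝ), Γ.Uapp i c' dcb ≤ Γ.Uapp i (c i) dcb

/-- An equilibrium when data is color-blind (unrestricted control). -/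
def IsCbEquilibrium (c : GrpI → ℝ) (dcb : ((j : Fin N) → Xs j) → ℝ) : Prop :=
  IsCbPolicy dcb ∧ Γ.BestRespondsCb c dcb ∧
    ∀ dcb', IsCbPolicy dcb' →
      Γ.UFcb dcb' (Γ.mucbRE c) (Γ.fcbRE c) ≤ Γ.UFcb dcb (Γ.mucbRE c) (Γ.fcbRE c)

/-- A `k_cb`-controlled equilibrium when data is color-blind. -/
def IsCbControlledEq (K : Set (((j : Fin N) → Xs j) → ℝ)) (c : GrpI → ℝ)
    (dcb : ((j : Fin N) → Xs j) → ℝ) : Prop :=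
  dcb ∈ K ∧ Γ.BestRespondsCb c dcb ∧
    ∀ dcb' ∈ K,
      Γ.UFcb dcb' (Γ.mucbRE c) (Γ.fcbRE c) ≤ Γ.UFcb dcb (Γ.mucbRE c) (Γ.fcbRE c)

end Game

/-- A control when data is color-blind: for each `X` and each
`(μ_cb, f_cb) ∈ Δ°(X) × (0,1)^X` it specifies a nonempty compact set of
color-blind decision policies. -/
structure CbControl : Type 1 where
  sets : ∀ (N : ℕ) (Xs : Fin N → Type) [∀ j, Fintype (Xs j)] [∀ j, Nonempty (Xs j)],
    (((j : Fin N) → Xs j) → ℝ) → (((j : Fin N) → Xs j) → ℝ) →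
      Set (((j : Fin N) → Xs j) → ℝ)
  nonempty : ∀ (N : ℕ) (Xs : Fin N → Type) [∀ j, Fintype (Xs j)]
    [∀ j, Nonempty (Xs j)] (μ f : ((j : Fin N) → Xs j) → ℝ),
    (∀ x, 0 < μ x) → (∑ x, μ x = 1) → (∀ x, f x ∈ Set.Ioo (0 : ℝ) 1) →
    (sets N Xs μ f).Nonempty
  compact : ∀ (N : ℕ) (Xs : Fin N → Type) [∀ j, Fintype (Xs j)]
    [∀ j, Nonempty (Xs j)] (μ f : ((j : Fin N) → Xs j) → ℝ),
    (∀ x, 0 < μ x) → (∑ x, μ x = 1) → (∀ x, f x ∈ Set.Ioo (0 : ℝ) 1) →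
    IsCompact (sets N Xs μ f)
  mem_policy : ∀ (N : ℕ) (Xs : Fin N → Type) [∀ j, Fintype (Xs j)]
    [∀ j, Nonempty (Xs j)] (μ f : ((j : Fin N) → Xs j) → ℝ),
    (∀ x, 0 < μ x) → (∑ x, μ x = 1) → (∀ x, f x ∈ Set.Ioo (0 : ℝ) 1) →
    sets N Xs μ f ⊆ {dcb | IsCbPolicy dcb}


/-!
The calibrated belief `f_RE(i, x) = G p(x_𝒴|q) / (G p(x_𝒴|q) + (1 - G) p(x_𝒴|u))` never depends
on the features outside `𝒴`, because the factor `p(x_{-𝒴} | i, x_𝒴)` cancels. Hence in every exact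
no-proxies equilibrium the firm treats `x = (1,0)` and `x = (1,1)` alike (here `𝒴 = {0}`), which
puts it at distance at least `1` from the policy accepting exactly `(1,0)`.

In the example game, at `c̄ ≡ 1` the firm is exactly indifferent on `x₀ = 1`. Tilting that belief
by `±η` along the proxy `x₁` puts `x₁` into `Ŷ(f)`, so accepting exactly `(1,0)` becomes
admissible and optimal, and the applicants' best response to it is again `c̄ ≡ 1`: an
`ε`-equilibrium for every `ε > 0`.
-/

open Set Real ProbabilityTheory

theorem setIntegral_Ioi_comp_add_right (f : ℝ → ℝ) (a c : ℝ) :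
    ∫ x in Ioi c, f (x + a) = ∫ x in Ioi (c + a), f x := by
  have e : MeasurableEmbedding fun x : ℝ => x + a :=
    (Homeomorph.addRight a).measurableEmbedding
  simpa using (measurePreserving_add_right volume a).setIntegral_preimage_emb e f (Ioi (c + a))

theorem setIntegral_Iic_eq_setIntegral_Ioi_of_symm {f : ℝ → ℝ} {m : ℝ}
    (hf : ∀ x, f (2 * m - x) = f x) : ∫ x in Iic m, f x = ∫ x in Ioi m, f x := by
  have h := integral_comp_neg_Iic m fun y => f (y + 2 * m)
  rw [setIntegral_Ioi_comp_add_right, show -m + 2 * m = m by ring] at h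
  rw [← h]
  exact setIntegral_congr_fun measurableSet_Iic fun x _ => by rw [← hf]; ring_nf

theorem setIntegral_Iic_eq_half_of_symm {f : ℝ → ℝ} {m : ℝ} (hf : ∀ x, f (2 * m - x) = f x)
    (hint : Integrable f) (h1 : ∫ x, f x = 1) : ∫ x in Iic m, f x = 1 / 2 := by
  have := intervalIntegral.integral_Iic_add_Ioi (b := m) hint.integrableOn hint.integrableOn
  rw [h1, ← setIntegral_Iic_eq_setIntegral_Ioi_of_symm hf] at this
  linarith

theorem setIntegral_Iic_le_of_sign_change {ψ : ℝ → ℝ} {B : ℝ} (hψ : Integrable ψ)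
    (hle : ∀ t ≤ B, 0 ≤ ψ t) (hge : ∀ t, B ≤ t → ψ t ≤ 0) (c : ℝ) :
    ∫ t in Iic c, ψ t ≤ ∫ t in Iic B, ψ t := by
  rw [← sub_nonneg, intervalIntegral.integral_Iic_sub_Iic hψ.integrableOn hψ.integrableOn]
  rcases le_total c B with h | h
  · exact intervalIntegral.integral_nonneg h fun t ht => hle t ht.2
  · rw [intervalIntegral.integral_symm, neg_nonneg, ← neg_nonneg, ← intervalIntegral.integral_neg]
    exact intervalIntegral.integral_nonneg h fun t ht => neg_nonneg.2 (hge t ht.1)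

theorem integrable_abs_mul_gaussianPDFReal (μ : ℝ) (v : NNReal) :
    Integrable fun x => |x| * gaussianPDFReal μ v x := by
  rcases eq_or_ne v 0 with rfl | hv
  · simp
  have h := ((memLp_id_gaussianReal (μ := μ) (v := v) 1).integrable le_rfl).abs
  rw [gaussianReal_of_var_ne_zero μ hv, integrable_withDensity_iff_integrable_smul'
    (measurable_gaussianPDF μ v) (Filter.Eventually.of_forall fun _ => gaussianPDF_lt_top)] at h
  simpa [toReal_gaussianPDF, mul_comm] using h

theorem GrpI.sum_univ {M : Type*} [AddCommMonoid M] (F : GrpI → M) :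
    ∑ i, F i = F GrpI.w + F GrpI.b :=
  Finset.sum_pair (by decide)

theorem sum_fin_two_bool {M : Type*} [AddCommMonoid M] (F : (Fin 2 → Bool) → M) :
    ∑ x, F x = F ![true, true] + F ![true, false] + (F ![false, true] + F ![false, false]) := by
  rw [← (finTwoArrowEquiv Bool).symm.sum_comp, Fintype.sum_prod_type]
  simp [finTwoArrowEquiv]

section Policies

variable {N : ℕ} {Xs : Fin N → Type} {I : Type}

theorem minDep_subset_of_depProp {f : I → ((j : Fin N) → Xs j) → ℝ} {S : Finset (Fin N)}
    (hS : DepProp f S) : minDep f ⊆ S :=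
  fun _ hj => (Finset.mem_filter.1 hj).2 S hS

theorem mem_minDep_of_ne {f : I → ((j : Fin N) → Xs j) → ℝ} {i : I} {j : Fin N}
    {x x' : (j : Fin N) → Xs j} (hx : ∀ k, k ≠ j → x k = x' k) (hf : f i x ≠ f i x') :
    j ∈ minDep f := by
  refine Finset.mem_filter.2 ⟨Finset.mem_univ j, fun S hS => ?_⟩
  by_contra hj
  exact hf (hS i x x' fun k hk => hx k fun hkj => hj (hkj ▸ hk))

variable [∀ j, Fintype (Xs j)]

theorem one_le_profDist {c c' : GrpI → ℝ} {d d' : GrpI → ((j : Fin N) → Xs j) → ℝ}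
    {x₁ x₂ : (j : Fin N) → Xs j} (hx : x₁ ≠ x₂) (h₁ : ∀ i, d i x₁ = 1) (h₂ : ∀ i, d i x₂ = 0)
    (h' : ∀ i, d' i x₁ = d' i x₂) : 1 ≤ profDist c d c' d' := by
  have hgroup : ∀ i, 1 / 2 ≤ ∑ x, (d i x - d' i x) ^ 2 := fun i =>
    calc 1 / 2 ≤ (d i x₁ - d' i x₁) ^ 2 + (d i x₂ - d' i x₂) ^ 2 := by
          rw [h₁, h₂, h']; nlinarith [sq_nonneg (1 - 2 * d' i x₂)]
      _ = ∑ x ∈ {x₁, x₂}, (d i x - d' i x) ^ 2 := by rw [Finset.sum_pair hx]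
      _ ≤ ∑ x, (d i x - d' i x) ^ 2 :=
          Finset.sum_le_sum_of_subset_of_nonneg (Finset.subset_univ _)
            fun _ _ _ => sq_nonneg _
  have hc : 0 ≤ ∑ i, (c i - c' i) ^ 2 := Finset.sum_nonneg fun _ _ => sq_nonneg _
  rw [profDist, ← Real.sqrt_one]
  refine Real.sqrt_le_sqrt ?_
  rw [GrpI.sum_univ fun i => ∑ x, (d i x - d' i x) ^ 2]
  linarith [hgroup GrpI.w, hgroup GrpI.b]

end Policies

namespace Game

variable {N : ℕ} {Xs : Fin N → Type} [∀ j, Fintype (Xs j)] [∀ j, Nonempty (Xs j)]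
variable (Γ : Game N Xs)

theorem G_pos (c : ℝ) : 0 < Γ.G c := by
  rw [G, setIntegral_pos_iff_support_of_nonneg_ae
    (Filter.Eventually.of_forall fun t => (Γ.g_pos t).le) Γ.g_int.integrableOn,
    Function.support_eq_univ fun t => (Γ.g_pos t).ne', univ_inter]
  simp

theorem G_le_one (c : ℝ) : Γ.G c ≤ 1 := by
  have h := intervalIntegral.integral_Iic_add_Ioi (b := c) Γ.g_int.integrableOn
    Γ.g_int.integrableOn
  have : 0 ≤ ∫ t in Ioi c, Γ.g t :=
    setIntegral_nonneg measurableSet_Ioi fun t _ => (Γ.g_pos t).le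
  rw [Γ.g_norm] at h
  rw [G]
  linarith

theorem sum_p (i : GrpI) (y : Cls) : ∑ x, Γ.p i x y = 1 := by
  rw [← Finset.sum_fiberwise Finset.univ Γ.proj, ← Γ.pY_sum y]
  refine Finset.sum_congr rfl fun xY _ => ?_
  calc ∑ x ∈ Finset.univ with Γ.proj x = xY, Γ.p i x y
      = ∑ x ∈ Finset.univ with Γ.proj x = xY, Γ.pY xY y * Γ.pC i x :=
        Finset.sum_congr rfl fun x hx => by rw [p, (Finset.mem_filter.1 hx).2]
    _ = Γ.pY xY y := by
        rw [← Finset.mul_sum]; convert mul_one (Γ.pY xY y); exact Γ.pC_sum i xY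

theorem lam_pos (i : GrpI) : 0 < Γ.lam i := by
  cases i
  · exact Γ.lamw_pos
  · exact sub_pos.2 Γ.lamw_lt_one

theorem fullSupp_muRE (c : GrpI → ℝ) : FullSupp (Γ.muRE c) := by
  refine ⟨fun i x => mul_pos (Γ.lam_pos i) ?_, ?_⟩
  · have hq : 0 < Γ.p i x Cls.q := mul_pos (Γ.pY_pos _ _) (Γ.pC_pos _ _)
    have hu : 0 ≤ Γ.p i x Cls.u := (mul_pos (Γ.pY_pos _ _) (Γ.pC_pos _ _)).le
    exact add_pos_of_pos_of_nonneg (mul_pos (Γ.G_pos _) hq)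
      (mul_nonneg (sub_nonneg.2 (Γ.G_le_one _)) hu)
  · have hgroup : ∀ i, ∑ x, Γ.muRE c i x = Γ.lam i := fun i => by
      simp only [muRE, ← Finset.mul_sum, Finset.sum_add_distrib, Γ.sum_p]
      ring
    simp only [hgroup, GrpI.sum_univ, lam]
    ring

theorem fRE_eq (c : GrpI → ℝ) (i : GrpI) (x : (j : Fin N) → Xs j) :
    Γ.fRE c i x = Γ.G (c i) * Γ.pY (Γ.proj x) Cls.q /
      (Γ.G (c i) * Γ.pY (Γ.proj x) Cls.q + (1 - Γ.G (c i)) * Γ.pY (Γ.proj x) Cls.u) := by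
  rw [fRE, p, p, eq_comm, ← mul_div_mul_right _ _ (Γ.pC_pos i x).ne']
  congr 1 <;> ring

theorem depProp_fRE (c : GrpI → ℝ) : DepProp (Γ.fRE c) Γ.Ysub := by
  intro i x x' hx
  have : Γ.proj x = Γ.proj x' := funext fun j => hx j j.2
  rw [fRE_eq, fRE_eq, this]

theorem mul_G_sub_integral_le (B c : ℝ) :
    B * Γ.G c - ∫ t in Iic c, t * Γ.g t ≤ B * Γ.G B - ∫ t in Iic B, t * Γ.g t := by
  have hid : Integrable fun t => t * Γ.g t :=
    Γ.g_abs_int.mono' (continuous_id.aestronglyMeasurable.mul Γ.g_int.aestronglyMeasurable)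
      (Filter.Eventually.of_forall fun t => by
        rw [Real.norm_eq_abs, abs_mul, abs_of_pos (Γ.g_pos t)])
  have hψ : Integrable fun t => (B - t) * Γ.g t := by
    simpa only [sub_mul] using
      ((Γ.g_int.const_mul B).sub hid : Integrable fun t => B * Γ.g t - t * Γ.g t)
  have hrep : ∀ a, ∫ t in Iic a, (B - t) * Γ.g t = B * Γ.G a - ∫ t in Iic a, t * Γ.g t :=
    fun a => by
      simp only [sub_mul]
      rw [integral_sub (Γ.g_int.const_mul B).integrableOn hid.integrableOn,
        integral_const_mul, G]
  rw [← hrep, ← hrep]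
  exact setIntegral_Iic_le_of_sign_change hψ
    (fun t ht => mul_nonneg (sub_nonneg.2 ht) (Γ.g_pos t).le)
    (fun t ht => mul_nonpos_of_nonpos_of_nonneg (sub_nonpos.2 ht) (Γ.g_pos t).le) c

theorem Uapp_eq (i : GrpI) (c : ℝ) (di : ((j : Fin N) → Xs j) → ℝ) :
    Γ.Uapp i c di = Γ.om * ∑ x, Γ.p i x Cls.u * di x +
      ((Γ.om * ∑ x, (Γ.p i x Cls.q - Γ.p i x Cls.u) * di x) * Γ.G c -
        ∫ t in Iic c, t * Γ.g t) := by
  simp only [Uapp, Finset.mul_sum, Finset.sum_mul]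
  rw [← add_sub_assoc, ← Finset.sum_add_distrib]
  congr 1
  exact Finset.sum_congr rfl fun x _ => by ring

theorem bestResponds_of_eq {c : GrpI → ℝ} {d : GrpI → ((j : Fin N) → Xs j) → ℝ}
    (h : ∀ i, c i = Γ.om * ∑ x, (Γ.p i x Cls.q - Γ.p i x Cls.u) * d i x) :
    Γ.BestResponds c d := by
  intro i c'
  rw [Uapp_eq, Uapp_eq, ← h i]
  linarith [Γ.mul_G_sub_integral_le (c i) c']

theorem UF_le_of_threshold {d μ f : GrpI → ((j : Fin N) → Xs j) → ℝ} (hμ : ∀ i x, 0 ≤ μ i x)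
    (hd : ∀ i x, d i x = 1 ∧ 0 ≤ f i x * Γ.vq - (1 - f i x) * Γ.vu ∨
      d i x = 0 ∧ f i x * Γ.vq - (1 - f i x) * Γ.vu ≤ 0)
    {d' : GrpI → ((j : Fin N) → Xs j) → ℝ} (hd' : IsPolicy d') :
    Γ.UF d' μ f ≤ Γ.UF d μ f := by
  refine Finset.sum_le_sum fun i _ => Finset.sum_le_sum fun x _ => ?_
  obtain ⟨h0, h1⟩ := hd' i x
  rcases hd i x with ⟨hdx, hs⟩ | ⟨hdx, hs⟩ <;> rw [hdx]
  · nlinarith [mul_nonneg (mul_nonneg (sub_nonneg.2 h1) (hμ i x)) hs]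
  · nlinarith [mul_nonpos_of_nonneg_of_nonpos (mul_nonneg h0 (hμ i x)) hs]

end Game

namespace NoProxiesFragile

/-- `p(x₀ | y)` for the relevant feature `x₀`; the proxy `x₁` is uniform given `(i, x₀)`. -/
def pRel : Bool → Cls → ℝ
  | true, Cls.q => 3 / 4
  | true, Cls.u => 1 / 4
  | false, Cls.q => 1 / 4
  | false, Cls.u => 3 / 4

def rel : ({0} : Finset (Fin 2)) := ⟨0, Finset.mem_singleton_self 0⟩

theorem eq_rel (j : ({0} : Finset (Fin 2))) : j = rel :=
  Subtype.ext (Finset.mem_singleton.1 j.2)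

theorem restrict_eq_iff (x : Fin 2 → Bool) (xY : ({0} : Finset (Fin 2)) → Bool) :
    (fun j : ({0} : Finset (Fin 2)) => x j.1) = xY ↔ x 0 = xY rel :=
  ⟨fun h => congrFun h rel, fun h => funext fun j => by rw [eq_rel j]; exact h⟩

def evalRel : (({0} : Finset (Fin 2)) → Bool) ≃ Bool where
  toFun xY := xY rel
  invFun b _ := b
  left_inv xY := funext fun j => by rw [eq_rel j]
  right_inv _ := rfl

theorem sum_pRel (y : Cls) : ∑ xY : ({0} : Finset (Fin 2)) → Bool, pRel (xY rel) y = 1 := by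
  rw [Fintype.sum_equiv evalRel (fun xY => pRel (xY rel) y) (fun b => pRel b y) fun _ => rfl,
    Fintype.sum_bool]
  cases y <;> norm_num [pRel]

/- The cost distribution is `𝒩(1, 1)`, so `G(1) = 1/2` and at `c̄ ≡ 1` the belief on `x₀ = 1` is
`3/4 = v_u / (v_q + v_u)`: the firm is indifferent there. Accepting exactly `(1,0)` gives
`ω (p((1,0)|q) - p((1,0)|u)) = 4 (3/8 - 1/8) = 1`, so `c̄ ≡ 1` is the applicants' best response. -/
def game : Game 2 (fun _ => Bool) where
  lamw := 1 / 2
  lamw_pos := by norm_num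
  lamw_lt_one := by norm_num
  Ysub := {0}
  Ysub_nonempty := Finset.singleton_nonempty 0
  pY := fun xY y => pRel (xY rel) y
  pC := fun _ _ => 1 / 2
  pY_pos := fun xY y => by cases xY rel <;> cases y <;> norm_num [pRel]
  pC_pos := fun _ _ => by norm_num
  pY_sum := sum_pRel
  pC_sum _ xY := by
    rw [Finset.sum_filter, sum_fin_two_bool]
    simp only [restrict_eq_iff]
    cases xY rel <;> norm_num
  g := gaussianPDFReal 1 1
  g_pos := fun c => gaussianPDFReal_pos 1 1 c one_ne_zero
  g_int := integrable_gaussianPDFReal 1 1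
  g_norm := integral_gaussianPDFReal_eq_one 1 one_ne_zero
  g_abs_int := integrable_abs_mul_gaussianPDFReal 1 1
  vq := 1
  vu := 3
  om := 4
  vq_pos := one_pos
  vu_pos := by norm_num
  om_pos := by norm_num

theorem oneNotLV : game.OneNotLV := by
  rintro ⟨x, hx⟩
  change pRel (x 0) Cls.q / pRel (x 0) Cls.u = 1 at hx
  cases h : x 0 <;> rw [h] at hx <;> norm_num [pRel] at hx

theorem G_one : game.G 1 = 1 / 2 :=
  setIntegral_Iic_eq_half_of_symm (fun x => by simp only [game, gaussianPDFReal]; ring_nf)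
    game.g_int game.g_norm

theorem fRE_one (i : GrpI) (x : Fin 2 → Bool) :
    game.fRE (fun _ => 1) i x = if x 0 then 3 / 4 else 1 / 4 := by
  rw [game.fRE_eq, G_one]
  change 1 / 2 * pRel (x 0) Cls.q /
    (1 / 2 * pRel (x 0) Cls.q + (1 - 1 / 2) * pRel (x 0) Cls.u) = _
  cases x 0 <;> norm_num [pRel]

def accept : GrpI → (Fin 2 → Bool) → ℝ := fun _ x => if x = ![true, false] then 1 else 0

def tilted (η : ℝ) : GrpI → (Fin 2 → Bool) → ℝ := fun _ x =>
  if x 0 then (if x 1 then 3 / 4 - η else 3 / 4 + η) else 1 / 4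

theorem openBelief_tilted {η : ℝ} (hη : 0 < η) (hη' : η < 1 / 4) :
    OpenBelief (tilted η) := by
  intro _ x
  simp only [tilted, mem_Ioo]
  split_ifs <;> constructor <;> linarith

theorem pairDist_tilted {η : ℝ} (hη : 0 ≤ η) (μ : GrpI → (Fin 2 → Bool) → ℝ) :
    pairDist μ (tilted η) μ (game.fRE fun _ => 1) = 2 * η := by
  have hμ : ∑ i, ∑ x, (μ i x - μ i x) ^ 2 = 0 := by simp
  have hgroup : ∀ i, ∑ x, (tilted η i x - game.fRE (fun _ => 1) i x) ^ 2 = 2 * η ^ 2 :=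
    fun i => by
      simp only [sum_fin_two_bool, fRE_one]
      change (3 / 4 - η - 3 / 4) ^ 2 + (3 / 4 + η - 3 / 4) ^ 2 +
        ((1 / 4 - 1 / 4) ^ 2 + (1 / 4 - 1 / 4) ^ 2 : ℝ) = _
      ring
  rw [pairDist, hμ, zero_add, GrpI.sum_univ fun i => ∑ x, (tilted η i x - _) ^ 2, hgroup,
    hgroup, show 2 * η ^ 2 + 2 * η ^ 2 = (2 * η) ^ 2 by ring, Real.sqrt_sq (by linarith)]

theorem accept_mem_noProxies {η : ℝ} (hη : 0 < η) (μ : GrpI → (Fin 2 → Bool) → ℝ) :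
    accept ∈ NoProxies μ (tilted η) := by
  refine ⟨fun _ x => by unfold accept; split_ifs <;> norm_num, fun _ _ x x' hx => ?_⟩
  have h0 : (0 : Fin 2) ∈ minDep (tilted η) :=
    mem_minDep_of_ne (i := GrpI.w) (x := ![true, false]) (x' := ![false, false])
      (fun k hk => by fin_cases k <;> simp_all)
      (ne_of_gt (by change (1 / 4 : ℝ) < 3 / 4 + η; linarith))
  have h1 : (1 : Fin 2) ∈ minDep (tilted η) :=
    mem_minDep_of_ne (i := GrpI.w) (x := ![true, false]) (x' := ![true, true])
      (fun k hk => by fin_cases k <;> simp_all)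
      (ne_of_gt (by change 3 / 4 - η < 3 / 4 + η; linarith))
  have : x = x' := funext fun k => by fin_cases k; exacts [hx 0 h0, hx 1 h1]
  rw [this]
  rfl

theorem UF_le_UF_accept {η : ℝ} (hη : 0 < η) {d' : GrpI → (Fin 2 → Bool) → ℝ}
    (hd' : IsPolicy d') :
    game.UF d' (game.muRE fun _ => 1) (tilted η) ≤
      game.UF accept (game.muRE fun _ => 1) (tilted η) := by
  refine game.UF_le_of_threshold (fun i x => ((game.fullSupp_muRE _).1 i x).le)
    (fun i x => ?_) hd'
  obtain ⟨a, b, rfl⟩ : ∃ a b, x = ![a, b] := ⟨x 0, x 1, by ext k; fin_cases k <;> rfl⟩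
  cases a <;> cases b
  · exact .inr ⟨if_neg (by decide), by change (1 / 4 : ℝ) * 1 - (1 - 1 / 4) * 3 ≤ 0; norm_num⟩
  · exact .inr ⟨if_neg (by decide), by change (1 / 4 : ℝ) * 1 - (1 - 1 / 4) * 3 ≤ 0; norm_num⟩
  · exact .inl ⟨rfl, by change 0 ≤ (3 / 4 + η) * 1 - (1 - (3 / 4 + η)) * 3; linarith⟩
  · exact .inr ⟨if_neg (by decide),
      by change (3 / 4 - η) * 1 - (1 - (3 / 4 - η)) * 3 ≤ 0; linarith⟩

theorem bestResponds_accept : game.BestResponds (fun _ => 1) accept := by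
  refine game.bestResponds_of_eq fun i => ?_
  simp only [accept, mul_ite, mul_one, mul_zero, Finset.sum_ite_eq']
  change (1 : ℝ) = 4 * (pRel true Cls.q * (1 / 2) - pRel true Cls.u * (1 / 2))
  norm_num [pRel]

theorem one_le_profDist_of_isControlledEq {c' : GrpI → ℝ} {d' : GrpI → (Fin 2 → Bool) → ℝ}
    (h : game.IsControlledEq (fun μ f => NoProxies μ f) c' d') :
    1 ≤ profDist (fun _ => 1) accept c' d' := by
  have hsub := minDep_subset_of_depProp (game.depProp_fRE c')
  refine one_le_profDist (x₁ := ![true, false]) (x₂ := ![true, true]) (by decide)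
    (fun _ => rfl) (fun _ => if_neg (by decide)) fun i => h.1.2 i i _ _ fun j hj => ?_
  obtain rfl : j = 0 := Finset.mem_singleton.1 (hsub hj)
  rfl

end NoProxiesFragile

open NoProxiesFragile

/-- **Proposition.** The no proxies control is fragile: there exist a game and
`δ̄ > 0` such that for every `ε > 0` there is a no-proxies-controlled
`ε`-equilibrium whose `ℓ²`-distance from every no-proxies-controlled
equilibrium of the game is at least `δ̄`. -/
theorem no_proxies_control_fragile :
    ∃ (N : ℕ) (Xs : Fin N → Type) (_ : ∀ j, Fintype (Xs j))
      (_ : ∀ j, Nonempty (Xs j)) (Γ : Game N Xs) (δbar : ℝ),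
      Γ.OneNotLV ∧ 0 < δbar ∧
      ∀ ε : ℝ, 0 < ε →
        ∃ (c : GrpI → ℝ) (d : GrpI → ((j : Fin N) → Xs j) → ℝ),
          Γ.IsCtrlEpsEq (fun μ f => NoProxies μ f) ε c d ∧
          ∀ (c' : GrpI → ℝ) (d' : GrpI → ((j : Fin N) → Xs j) → ℝ),
            Γ.IsControlledEq (fun μ f => NoProxies μ f) c' d' →
            δbar ≤ profDist c d c' d' := by
  refine ⟨2, fun _ => Bool, inferInstance, inferInstance, game, 1, oneNotLV, one_pos,
    fun ε hε => ?_⟩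
  set η := min (ε / 2) (1 / 8)
  have hη : 0 < η := lt_min (half_pos hε) (by norm_num)
  have hη' : η < 1 / 4 := (min_le_right _ _).trans_lt (by norm_num)
  refine ⟨fun _ => 1, accept, ⟨game.muRE fun _ => 1, tilted η, game.fullSupp_muRE _,
    openBelief_tilted hη hη', ?_, bestResponds_accept, accept_mem_noProxies hη _,
    fun d' hd' => UF_le_UF_accept hη hd'.1⟩,
    fun c' d' h => one_le_profDist_of_isControlledEq h⟩
  rw [pairDist_tilted hη.le]
  linarith [min_le_left (ε / 2) (1 / 8)]
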